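/- arXiv:2405.00498 — 6 statements merged into one kernel-verified Lean document; each statement's English description precedes it below -/
import Mathlib

section
/- Let D and C be categories with finite limits and let U : D ⥤ C be a functor that preserves finite limits and is comonadic. If C is cartesian closed, then D is cartesian closed. -/
/-!
For `B : D`, the functor `B ⊗ -` followed by `U` is `U` followed by `U B ⊗ -`, because `U`
preserves binary products. The latter composite is a left adjoint (`U` is one, and `U B ⊗ -` is
one since `C` is closed), so by the adjoint lifting theorem for comonadic functors `B ⊗ -` is a
left adjoint too; the coreflexive equalizers it needs exist in `D` since `D` has finite limits.
-/

open CategoryTheory CategoryTheory.Limits CategoryTheory.MonoidalCategory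

universe v₁ v₂ u₁ u₂

namespace CategoryTheory

variable {C : Type u₁} [Category.{v₁} C] {D : Type u₂} [Category.{v₂} D]
  [CartesianMonoidalCategory C] [CartesianMonoidalCategory D]

lemma isLeftAdjoint_tensorLeft_of_comonadic [HasCoreflexiveEqualizers D]
    (U : D ⥤ C) [ComonadicLeftAdjoint U] [∀ A B, PreservesLimit (pair A B) U]
    (B : D) [Closed (U.obj B)] : (tensorLeft B).IsLeftAdjoint :=
  have : (tensorLeft B ⋙ U).IsLeftAdjoint :=
    (((comonadicAdjunction U).comp (ihom.adjunction (U.obj B))).ofNatIsoLeft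
      (CartesianMonoidalCategory.prodComparisonNatIso U B).symm).isLeftAdjoint
  isLeftAdjoint_triangle_lift_comonadic U

end CategoryTheory

theorem coalgebra_cartesianClosed_of_comonadic_general
    {C : Type u₁} [Category.{v₁} C] {D : Type u₂} [Category.{v₂} D]
    [HasFiniteLimits D]
    (U : D ⥤ C) [PreservesFiniteLimits U] [ComonadicLeftAdjoint U]
    [CartesianMonoidalCategory C] [MonoidalClosed C] :
    letI : CartesianMonoidalCategory D := CartesianMonoidalCategory.ofHasFiniteProducts
    Nonempty (MonoidalClosed D) :=
  letI : CartesianMonoidalCategory D := CartesianMonoidalCategory.ofHasFiniteProducts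
  ⟨⟨fun B =>
    have := isLeftAdjoint_tensorLeft_of_comonadic U B
    ⟨_, Adjunction.ofIsLeftAdjoint (tensorLeft B)⟩⟩⟩

/-- Let `D` and `C` be categories with finite limits and let `U : D ⥤ C`
be a functor that preserves finite limits and is comonadic (i.e. it admits a right adjoint
and the comparison functor to the category of coalgebras of the induced comonad is an
equivalence, which is exactly the Mathlib class `ComonadicLeftAdjoint U`).
If `C` is cartesian closed, then `D` is cartesian closed. -/
theorem coalgebra_cartesianClosed_of_comonadic
    {C : Type u₁} [Category.{v₁} C] {D : Type u₂} [Category.{v₂} D]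
    [HasFiniteLimits C] [HasFiniteLimits D]
    (U : D ⥤ C) [PreservesFiniteLimits U] [ComonadicLeftAdjoint U]
    [CartesianMonoidalCategory C] [MonoidalClosed C] :
    letI : CartesianMonoidalCategory D := CartesianMonoidalCategory.ofHasFiniteProducts
    Nonempty (MonoidalClosed D) :=
  coalgebra_cartesianClosed_of_comonadic_general U
end

section
/- Let C be a category with finite limits which is cartesian closed and admits a subobject classifier, and let G be a comonad on C whose underlying endofunctor preserves finite limits. Then the category of G-coalgebras admits a subobject classifier. -/
/-!
Let `τ : GΩ ⟶ Ω` classify the mono `G true` (a finite-limit preserving `G` preserves monos).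
For a subcoalgebra `m : A ⟶ B`, the square formed by `m`, `G m` and the two structure maps is a
pullback, because the counit splits the structure maps. Pasting it with `G` applied to the
classifying square of `m` shows that the coalgebra map `B ⟶ GΩ` transposed from the classifying
map `φ` of `m` pulls `G true` back to `m`. Conversely, if a coalgebra map `ψ : B ⟶ GΩ` pulls
`G true` back to `m`, pasting with the square of `τ` gives `ψ ≫ τ = φ`, so `ψ` followed by the
transpose of `τ` is the transpose of `φ`. Both facts together say that the equalizer of the
transpose of `τ` and the identity of the cofree coalgebra `GΩ` classifies subcoalgebras, with
`G true` as its truth value.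
-/

open CategoryTheory CategoryTheory.Limits

universe v u

/-- A monomorphism `truth : ⊤_ C ⟶ Ω` out of the terminal object is a subobject classifier
if every monomorphism `m : A ⟶ B` arises as the pullback of `truth` along a unique
classifying morphism `B ⟶ Ω`. -/
structure IsClassifier {C : Type u} [Category.{v} C] [HasTerminal C]
    {Ω : C} (truth : ⊤_ C ⟶ Ω) : Prop where
  mono : Mono truth
  classifies : ∀ {A B : C} (m : A ⟶ B), Mono m →
    ∃! χ : B ⟶ Ω, IsPullback (terminal.from A) m truth χ

/-- The category of coalgebras for a comonad whose underlying endofunctor preserves finite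
limits has finite limits, created by the forgetful functor. -/
theorem coalgebraHasFiniteLimits {C : Type u} [Category.{v} C] [HasFiniteLimits C]
    (G : Comonad C) [PreservesFiniteLimits G.toFunctor] :
    HasFiniteLimits (Comonad.Coalgebra G) := by
  constructor
  intro J _ _
  haveI : PreservesLimitsOfShape J G.toFunctor := inferInstance
  exact hasLimitsOfShape_of_hasLimitsOfShape_createsLimitsOfShape (Comonad.forget G)

noncomputable def IsClassifier.toClassifier {C : Type u} [Category.{v} C] [HasTerminal C]
    {Ω : C} {truth : ⊤_ C ⟶ Ω} (h : IsClassifier truth) : Subobject.Classifier C :=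
  Subobject.Classifier.mkOfTerminalΩ₀ (⊤_ C) terminalIsTerminal Ω truth
    (fun m _ => (h.classifies m ‹_›).exists.choose)
    (fun m _ => (h.classifies m ‹_›).exists.choose_spec.flip)
    (fun m _ _ hχ =>
      (h.classifies m ‹_›).unique hχ.flip (h.classifies m ‹_›).exists.choose_spec)

namespace CategoryTheory

theorem IsPullback.comp_mono_iff {C : Type u} [Category.{v} C] {P X Y Z W : C}
    {fst : P ⟶ X} {snd : P ⟶ Y} {f : X ⟶ Z} {g : Y ⟶ Z} (k : Z ⟶ W) [Mono k] :
    IsPullback fst snd (f ≫ k) (g ≫ k) ↔ IsPullback fst snd f g := by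
  have hk : IsPullback (𝟙 X) f (f ≫ k) k := IsPullback.of_horiz_isIso_mono ⟨by simp⟩
  refine ⟨fun h => ?_, fun h => by simpa using h.paste_horiz hk⟩
  have w : fst ≫ f = snd ≫ g := (cancel_mono k).1 (by simpa using h.w)
  exact (IsPullback.paste_horiz_iff hk w).1 (by simpa using h)

theorem Subobject.Classifier.isClassifier {C : Type u} [Category.{v} C] [HasTerminal C]
    (𝒞 : Classifier C) :
    IsClassifier (𝒞.χ₀ (⊤_ C) ≫ 𝒞.truth) where
  mono := terminalIsTerminal.mono_from _
  classifies {_ _} m _ := by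
    let 𝒞' := 𝒞.ofIso (Iso.refl _) (𝒞.isTerminalΩ₀.uniqueUpToIso terminalIsTerminal)
      terminal.from (𝒞.χ₀ (⊤_ C) ≫ 𝒞.truth) (by simp)
    exact ⟨𝒞'.χ m, (𝒞'.isPullback m).flip, fun _ hχ => 𝒞'.uniq m hχ.flip⟩

namespace Comonad

variable {C : Type u} [Category.{v} C] {G : Comonad C}

@[simps]
def Coalgebra.toCofree (X : G.Coalgebra) {Y : C} (g : X.A ⟶ Y) : X ⟶ G.cofree.obj Y where
  f := X.a ≫ G.map g
  h := by
    show X.a ≫ G.map (X.a ≫ G.map g) = (X.a ≫ G.map g) ≫ G.δ.app Y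
    rw [Functor.map_comp, ← X.coassoc_assoc, Category.assoc, G.δ.naturality]
    rfl

lemma Coalgebra.toCofree_comp_cofree_map (X : G.Coalgebra) {Y Z : C} (g : X.A ⟶ Y)
    (t : Y ⟶ Z) : X.toCofree g ≫ G.cofree.map t = X.toCofree (g ≫ t) :=
  Coalgebra.Hom.ext (by
    show (X.a ≫ G.map g) ≫ G.map t = X.a ≫ G.map (g ≫ t)
    simp)

lemma Coalgebra.comp_toCofree {B D : G.Coalgebra} {Z : C} (ψ : B ⟶ D) (τ : D.A ⟶ Z) :
    ψ ≫ D.toCofree τ = B.toCofree (ψ.f ≫ τ) :=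
  Coalgebra.Hom.ext (by
    show ψ.f ≫ D.a ≫ G.map τ = B.a ≫ G.map (ψ.f ≫ τ)
    rw [Functor.map_comp, ψ.h_assoc])

lemma Coalgebra.isPullback_a_of_mono {A B : G.Coalgebra} (m : A ⟶ B) [Mono m.f]
    [Mono (G.map m.f)] : IsPullback m.f A.a B.a (G.map m.f) := by
  have hε : G.ε.app A.A ≫ m.f = G.map m.f ≫ G.ε.app B.A := (G.ε.naturality m.f).symm
  have hfst (s : PullbackCone B.a (G.map m.f)) : (s.snd ≫ G.ε.app A.A) ≫ m.f = s.fst := by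
    rw [Category.assoc, hε, ← Category.assoc, ← s.condition, Category.assoc, B.counit,
      Category.comp_id]
  refine IsPullback.of_isLimit (PullbackCone.IsLimit.mk m.h.symm
    (fun s => s.snd ≫ G.ε.app A.A) hfst (fun s => ?_) (fun s l hl _ => ?_))
  · rw [← cancel_mono (G.map m.f), Category.assoc, m.h, ← Category.assoc, hfst, s.condition]
  · rw [← cancel_mono m.f, hl, hfst]

lemma isPullback_toCofree [PreservesLimitsOfShape WalkingCospan G.toFunctor]
    {A B : G.Coalgebra} (m : A ⟶ B) [Mono m.f] {X Y : C} {a : A.A ⟶ X} {φ : B.A ⟶ Y}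
    {t : X ⟶ Y} (h : IsPullback m.f a φ t) :
    IsPullback m (A.toCofree a) (B.toCofree φ) (G.cofree.map t) :=
  IsPullback.of_map G.forget
    (by rw [Coalgebra.toCofree_comp_cofree_map, ← h.w, Coalgebra.comp_toCofree])
    ((Coalgebra.isPullback_a_of_mono m).paste_vert (h.map G.toFunctor))

instance Coalgebra.mono_f [HasPullbacks C] [PreservesLimitsOfShape WalkingCospan G.toFunctor]
    {A B : G.Coalgebra} (m : A ⟶ B) [Mono m] : Mono m.f :=
  G.forget.map_mono m

section Classifier

variable (G) [PreservesLimitsOfShape WalkingCospan G.toFunctor] (𝒞 : Subobject.Classifier C)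

noncomputable def isTerminalCofree : IsTerminal (G.cofree.obj 𝒞.Ω₀) :=
  haveI := G.adj.rightAdjoint_preservesLimits
  𝒞.isTerminalΩ₀.isTerminalObj G.cofree

def classifierEndo : G.cofree.obj 𝒞.Ω ⟶ G.cofree.obj 𝒞.Ω :=
  (G.cofree.obj 𝒞.Ω).toCofree (𝒞.χ (G.map 𝒞.truth) : G.obj 𝒞.Ω ⟶ 𝒞.Ω)

lemma cofree_map_truth_comp_classifierEndo :
    G.cofree.map 𝒞.truth ≫ classifierEndo G 𝒞 = G.cofree.map 𝒞.truth :=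
  calc G.cofree.map 𝒞.truth ≫ classifierEndo G 𝒞
      = (G.cofree.obj 𝒞.Ω₀).toCofree (𝒞.χ₀ _ ≫ 𝒞.truth) :=
        (Coalgebra.comp_toCofree _ _).trans
          (congrArg (G.cofree.obj 𝒞.Ω₀).toCofree (𝒞.isPullback (G.map 𝒞.truth)).w)
    _ = G.cofree.map 𝒞.truth := by
        rw [← Coalgebra.toCofree_comp_cofree_map,
          (isTerminalCofree G 𝒞).hom_ext (Coalgebra.toCofree _ _) (𝟙 _), Category.id_comp]

variable {G 𝒞}

lemma isPullback_toCofree_χ {A B : G.Coalgebra} (m : A ⟶ B) [Mono m.f] :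
    IsPullback m ((isTerminalCofree G 𝒞).from A) (B.toCofree (𝒞.χ m.f))
      (G.cofree.map 𝒞.truth) := by
  have h := isPullback_toCofree m (𝒞.isPullback m.f)
  rwa [(isTerminalCofree G 𝒞).hom_ext (A.toCofree _) ((isTerminalCofree G 𝒞).from A)] at h

variable [HasPullbacks C]

lemma comp_classifierEndo_of_isPullback {A B : G.Coalgebra} (m : A ⟶ B) [Mono m.f]
    {x : A ⟶ G.cofree.obj 𝒞.Ω₀} {ψ : B ⟶ G.cofree.obj 𝒞.Ω}
    (h : IsPullback m x ψ (G.cofree.map 𝒞.truth)) :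
    ψ ≫ classifierEndo G 𝒞 = B.toCofree (𝒞.χ m.f) :=
  (Coalgebra.comp_toCofree ψ _).trans (congrArg B.toCofree (𝒞.uniq m.f
    ((h.map G.forget : IsPullback m.f x.f ψ.f (G.map 𝒞.truth)).paste_vert
      (𝒞.isPullback (G.map 𝒞.truth)))))

variable [HasEqualizers C] [PreservesLimitsOfShape WalkingParallelPair G.toFunctor] (G 𝒞)

noncomputable def coalgebraClassifier : Subobject.Classifier G.Coalgebra :=
  haveI := hasLimitsOfShape_of_hasLimitsOfShape_createsLimitsOfShape
    (J := WalkingParallelPair) G.forget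
  Subobject.Classifier.mkOfTerminalΩ₀ (G.cofree.obj 𝒞.Ω₀) (isTerminalCofree G 𝒞)
    (equalizer (classifierEndo G 𝒞) (𝟙 _))
    (equalizer.lift (G.cofree.map 𝒞.truth)
      (by simpa using cofree_map_truth_comp_classifierEndo G 𝒞))
    (fun {_ B} m _ => equalizer.lift (B.toCofree (𝒞.χ m.f))
      (by simpa using comp_classifierEndo_of_isPullback m (isPullback_toCofree_χ m)))
    (fun m _ => (IsPullback.comp_mono_iff (equalizer.ι _ _)).1
      (by simpa using isPullback_toCofree_χ m))
    (fun m _ χ hχ => by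
      have hι := (IsPullback.comp_mono_iff (equalizer.ι _ _)).2 hχ
      rw [equalizer.lift_ι] at hι
      refine equalizer.hom_ext ?_
      rw [equalizer.lift_ι, ← comp_classifierEndo_of_isPullback m hι, Category.assoc,
        equalizer.condition, Category.comp_id])

end Classifier

end Comonad

end CategoryTheory

theorem coalgebra_hasClassifier_general {C : Type u} [Category.{v} C] [HasFiniteLimits C]
    {Ω : C} (truth : ⊤_ C ⟶ Ω) (h : IsClassifier truth)
    (G : Comonad C) [PreservesFiniteLimits G.toFunctor] :
    letI : HasFiniteLimits (Comonad.Coalgebra G) := coalgebraHasFiniteLimits G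
    ∃ (Ω' : Comonad.Coalgebra G) (truth' : ⊤_ (Comonad.Coalgebra G) ⟶ Ω'),
      IsClassifier truth' :=
  letI := coalgebraHasFiniteLimits G
  ⟨_, _, (Comonad.coalgebraClassifier G h.toClassifier).isClassifier⟩

/-- Let `C` be a category with finite limits which is cartesian closed and
admits a subobject classifier, and let `G` be a comonad on `C` whose underlying endofunctor
preserves finite limits. Then the category of `G`-coalgebras admits a subobject classifier. -/
theorem coalgebra_hasClassifier {C : Type u} [Category.{v} C] [HasFiniteLimits C]
    [CartesianMonoidalCategory C] [MonoidalClosed C]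
    {Ω : C} (truth : ⊤_ C ⟶ Ω) (h : IsClassifier truth)
    (G : Comonad C) [PreservesFiniteLimits G.toFunctor] :
    letI : HasFiniteLimits (Comonad.Coalgebra G) := coalgebraHasFiniteLimits G
    ∃ (Ω' : Comonad.Coalgebra G) (truth' : ⊤_ (Comonad.Coalgebra G) ⟶ Ω'),
      IsClassifier truth' :=
  coalgebra_hasClassifier_general truth h G
end

section
/- Let C be a category with pullbacks and let P be a class of morphisms of C that is stable under base change and respects isomorphisms. Then P is stable under composition if and only if for all morphisms q : B ⟶ A and p : E ⟶ B with q ∈ P and p ∈ P there exist a morphism s : S ⟶ A with s ∈ P together with a bijection Hom_{C/B}(p, q*(r)) ≅ Hom_{C/A}(s, r), natural in r : D ⟶ A ranging over the slice category C/A, where q* : C/A ⥤ C/B denotes the pullback (base change) functor along q. -/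
open CategoryTheory CategoryTheory.Limits Opposite

universe v u

/-- The adjunction `Over.map q ⊣ Over.pullback q` as a coyoneda iso. -/
noncomputable def sigmaAdjIso {C : Type u} [Category.{v} C] [HasPullbacks C]
    {A B E : C} (q : B ⟶ A) (p : E ⟶ B) :
    (Over.pullback q ⋙ coyoneda.obj (op (Over.mk p))) ≅
      coyoneda.obj (op (Over.mk (p ≫ q))) :=
  NatIso.ofComponents
    (fun r => (((Over.mapPullbackAdj q).homEquiv (Over.mk p) r).symm).toIso)
    (by
      intro r r' h
      ext u
      exact ((Over.mapPullbackAdj q).homEquiv_naturality_right_symm u h))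

/-- Let `C` be a category with pullbacks and let `P` be a class of morphisms
of `C` that is stable under base change and respects isomorphisms. Then `P` is stable under
composition if and only if for all `q : B ⟶ A` and `p : E ⟶ B` in `P` there exist `s : S ⟶ A`
in `P` together with a bijection `Hom_{C/B}(p, q*(r)) ≅ Hom_{C/A}(s, r)`, natural in
`r : D ⟶ A` ranging over the slice category `C/A`, where `q*` denotes the base change
functor along `q`.  (Proposition 3.1.4: a display category admits Σs iff displays compose.) -/
theorem stableUnderComposition_iff_sigma {C : Type u} [Category.{v} C] [HasPullbacks C]
    (P : MorphismProperty C) [P.IsStableUnderBaseChange] [P.RespectsIso] :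
    P.IsStableUnderComposition ↔
      ∀ {A B E : C} (q : B ⟶ A) (p : E ⟶ B), P q → P p →
        ∃ (S : C) (s : S ⟶ A), P s ∧
          Nonempty ((Over.pullback q ⋙ coyoneda.obj (op (Over.mk p))) ≅
            coyoneda.obj (op (Over.mk s))) := by
  constructor
  · intro hc A B E q p hq hp
    exact ⟨E, p ≫ q, hc.comp_mem p q hp hq, ⟨sigmaAdjIso q p⟩⟩
  · intro h
    constructor
    intro X Y Z f g hf hg
    obtain ⟨S, s, hs, ⟨e⟩⟩ := h g f hg hf
    -- coyoneda iso between `Over.mk (f ≫ g)` and `Over.mk s`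
    have e' : coyoneda.obj (op (Over.mk (f ≫ g))) ≅ coyoneda.obj (op (Over.mk s)) :=
      (sigmaAdjIso g f).symm ≪≫ e
    have e'' : Over.mk s ≅ Over.mk (f ≫ g) :=
      ((Coyoneda.fullyFaithful (C := Over Z)).preimageIso e').unop
    have hw : e''.hom.left ≫ (f ≫ g) = s := Over.w e''.hom
    have : P (e''.hom.left ≫ (f ≫ g)) := by rw [hw]; exact hs
    have hiso : IsIso e''.hom.left :=
      (inferInstance : IsIso ((Over.forget Z).map e''.hom))
    rwa [P.cancel_left_of_respectsIso] at this
end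

section
/- Let C be a category with pullbacks and let G be a comonad on C whose underlying endofunctor preserves pullbacks (so that the category of G-coalgebras has pullbacks, created by the forgetful functor). Let P be a class of morphisms of C that is stable under base change and respects isomorphisms. Then the class Q of morphisms of the category of G-coalgebras defined by Q f ⇔ P (forget f) (the inverse image of P along the forgetful functor) is stable under base change. -/
open CategoryTheory CategoryTheory.Limits

universe v u

/-- Let `C` be a category with pullbacks and `G` a comonad on `C` whose
underlying endofunctor preserves pullbacks (so the category of `G`-coalgebras has pullbacks,
created by the forgetful functor).  If `P` is a class of morphisms of `C` stable under base
change and respecting isomorphisms, then the inverse image `Q` of `P` along the forgetful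
functor (`Q f ⇔ P (forget f)`) is stable under base change.
(Section 4.2: the display category of coalgebras is a display category.) -/
theorem coalgebra_inverseImage_isStableUnderBaseChange
    {C : Type u} [Category.{v} C] [HasPullbacks C]
    (G : Comonad C) [PreservesLimitsOfShape WalkingCospan G.toFunctor]
    (P : MorphismProperty C) [P.IsStableUnderBaseChange] [P.RespectsIso] :
    (P.inverseImage (Comonad.forget G)).IsStableUnderBaseChange := by
  constructor
  intro X Y Y' S f g f' g' sq hg
  exact MorphismProperty.of_isPullback (P := P)
    (sq.map (Comonad.forget G)) hg
end

section
/- Let C be a small category, let ι : Discrete (objects of C) ⥤ C be the canonical inclusion of the discrete category on the objects of C, and consider the restriction functor (whiskering along ι^op) from the category of presheaves of types on C to the category of presheaves of types on the discrete category (equivalently, families of types indexed by the objects of C). This restriction functor is faithful and comonadic: it admits a right adjoint (given by right Kan extension along ι^op), and the comparison functor to the category of coalgebras of the induced comonad is an equivalence of categories. -/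
open CategoryTheory CategoryTheory.Limits

universe u u₁ u₂ v₁ v₂ v₃

/-!
Precomposition with an essentially surjective functor `F` reflects isomorphisms (every object
of the codomain is isomorphic to some `F.obj X`), has right Kan extension along `F` as right
adjoint, and preserves every limit that exists in the target, since limits of functors are
computed pointwise. The coreflexive form of Beck's comonadicity theorem therefore applies, and
the inclusion of the objects of `C` is bijective on objects.
-/

namespace CategoryTheory.Functor

variable {A B : Type u₁} [Category.{v₁} A] [Category.{v₂} B] (E : Type u₂) [Category.{v₃} E]
  (F : A ⥤ B) [F.EssSurj]

lemma faithful_whiskeringLeft_obj_of_essSurj : ((whiskeringLeft A B E).obj F).Faithful where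
  map_injective {G H} α β h := by
    ext Y
    let e := F.objObjPreimageIso Y
    rw [← cancel_epi (G.map e.hom), α.naturality, β.naturality]
    exact congrArg (· ≫ H.map e.hom) (NatTrans.congr_app h _)

lemma reflectsIsomorphisms_whiskeringLeft_obj_of_essSurj :
    ((whiskeringLeft A B E).obj F).ReflectsIsomorphisms where
  reflects {G H} α _ := by
    rw [NatTrans.isIso_iff_isIso_app]
    intro Y
    rw [← NatTrans.isIso_app_iff_of_iso α (F.objObjPreimageIso Y)]
    exact inferInstanceAs (IsIso ((((whiskeringLeft A B E).obj F).map α).app _))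

lemma nonempty_comonadicLeftAdjoint_whiskeringLeft_obj_of_essSurj [HasEqualizers E]
    [∀ G : A ⥤ E, F.HasRightKanExtension G] :
    Nonempty (ComonadicLeftAdjoint ((whiskeringLeft A B E).obj F)) :=
  have := reflectsIsomorphisms_whiskeringLeft_obj_of_essSurj E F
  have : Comonad.PreservesLimitOfIsCoreflexivePair ((whiskeringLeft A B E).obj F) :=
    ⟨fun _ _ _ _ _ => inferInstance⟩
  ⟨Comonad.comonadicOfHasPreservesCoreflexiveEqualizersOfReflectsIsomorphisms (F.ranAdjunction E)⟩

end CategoryTheory.Functor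

instance CategoryTheory.Discrete.essSurj_functor_id (C : Type*) [Category* C] :
    (Discrete.functor (id : C → C)).EssSurj where
  mem_essImage X := ⟨⟨X⟩, ⟨Iso.refl X⟩⟩

/-- Let `C` be a small category, `ι : Discrete C ⥤ C` the canonical
inclusion of the discrete category on the objects of `C`, and consider the restriction
functor (whiskering along `ι.op`) from presheaves of types on `C` to presheaves of types on
the discrete category (families of types indexed by the objects of `C`).  This restriction
functor is faithful and comonadic: it admits a right adjoint and the comparison functor to
the category of coalgebras of the induced comonad is an equivalence.
(Example 6.3.3 of the paper: presheaf toposes are Hofmann–Streicher.) -/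
theorem presheaf_restriction_to_discrete_faithful_comonadic (C : Type u) [SmallCategory C] :
    letI ι : Discrete C ⥤ C := Discrete.functor id
    letI res : (Cᵒᵖ ⥤ Type u) ⥤ ((Discrete C)ᵒᵖ ⥤ Type u) :=
      (Functor.whiskeringLeft (Discrete C)ᵒᵖ Cᵒᵖ (Type u)).obj ι.op
    res.Faithful ∧ Nonempty (ComonadicLeftAdjoint res) :=
  ⟨Functor.faithful_whiskeringLeft_obj_of_essSurj _ _,
    Functor.nonempty_comonadicLeftAdjoint_whiskeringLeft_obj_of_essSurj _ _⟩
end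

section
/- Let C be a category with finite limits which is cartesian closed and admits a subobject classifier ⊤ : 1 ⟶ Ω. Let P be a class of morphisms of C that is stable under base change, respects isomorphisms, is stable under composition, contains all monomorphisms of C, and contains the unique morphism Ω ⟶ 1. Let G be a comonad on C whose underlying endofunctor preserves finite limits and maps morphisms in P to morphisms in P. Let Q be the class of morphisms of the category of G-coalgebras whose underlying morphism lies in P. Then: (i) Q is stable under base change; (ii) Q is stable under composition and respects isomorphisms; (iii) Q contains all monomorphisms of the category of G-coalgebras; and (iv) the category of G-coalgebras admits a subobject classifier ⊤' : 1 ⟶ Ω' such that the unique morphism Ω' ⟶ 1 lies in Q. -/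
open CategoryTheory CategoryTheory.Limits

universe v u

/-! Because `G` is left exact, the forgetful functor creates finite limits, so it preserves and
reflects pullbacks and monomorphisms; this gives (i)–(iii).

For (iv), let `τ : GΩ ⟶ Ω` classify the subobject `G truth` and let `j` be the endomorphism of
the cofree coalgebra `GΩ` transposed to `τ`; the classifier of coalgebras is the equalizer
`ι : Ω' ⟶ GΩ` of `𝟙` and `j`. A coalgebra map `ψ : B ⟶ Ω'` is determined by the transpose
`χ : B.A ⟶ Ω` of `ψ ≫ ι`, and on the fixed points of `j` the maps `τ` and `ε` agree, so the
pullback of `truth'` along `ψ` is the pullback of `truth` along `χ`. Conversely, let `χ`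
classify a subcoalgebra `m : A ⟶ B` and let `χ̂ = B.a ≫ Gχ` be its transpose. The square formed
by `m`, `Gm` and the structure maps is a pullback (it is split by the counit), so pulling
`G truth` back along `χ̂` gives `m` again. Hence `χ̂ ≫ τ = χ`, that is, `χ̂` is fixed by `j` and
factors through `Ω'`. -/

namespace IsClassifier

variable {C : Type u} [Category.{v} C] [HasTerminal C] {Ω : C} {truth : ⊤_ C ⟶ Ω}

noncomputable def χ (h : IsClassifier truth) {A B : C} (m : A ⟶ B) [Mono m] : B ⟶ Ω :=
  (h.classifies m inferInstance).exists.choose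

theorem isPullback_χ (h : IsClassifier truth) {A B : C} (m : A ⟶ B) [Mono m] :
    IsPullback (terminal.from A) m truth (h.χ m) :=
  (h.classifies m inferInstance).exists.choose_spec

theorem uniq (h : IsClassifier truth) {A B : C} {m : A ⟶ B} [Mono m] {χ₁ χ₂ : B ⟶ Ω}
    (h₁ : IsPullback (terminal.from A) m truth χ₁)
    (h₂ : IsPullback (terminal.from A) m truth χ₂) :
    χ₁ = χ₂ :=
  (h.classifies m inferInstance).unique h₁ h₂

end IsClassifier

theorem CategoryTheory.Adjunction.comp_homEquiv_eq_self_iff {C D : Type*} [Category C]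
    [Category D] {F : C ⥤ D} {R : D ⥤ C} (adj : F ⊣ R) {B : C} {Y : D} (φ : B ⟶ R.obj Y)
    (τ : F.obj (R.obj Y) ⟶ Y) :
    φ ≫ adj.homEquiv _ _ τ = φ ↔ F.map φ ≫ τ = (adj.homEquiv _ _).symm φ := by
  rw [← (adj.homEquiv _ _).symm.injective.eq_iff, adj.homEquiv_naturality_left_symm,
    Equiv.symm_apply_apply]

namespace CategoryTheory.MorphismProperty

variable {C D : Type*} [Category C] [Category D]

instance IsStableUnderBaseChange.inverseImage (P : MorphismProperty D)
    [P.IsStableUnderBaseChange] (F : C ⥤ D) [PreservesLimitsOfShape WalkingCospan F] :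
    (P.inverseImage F).IsStableUnderBaseChange where
  of_isPullback sq hg := P.of_isPullback (sq.map F) hg

theorem monomorphisms_le_inverseImage {P : MorphismProperty D} (F : C ⥤ D)
    [F.PreservesMonomorphisms] (hP : monomorphisms D ≤ P) :
    monomorphisms C ≤ P.inverseImage F :=
  fun _ _ f (_ : Mono f) => hP _ (F.map_mono f)

theorem map_terminalFrom_iff (P : MorphismProperty D) [P.RespectsIso] [HasTerminal C]
    [HasTerminal D] (F : C ⥤ D) [PreservesLimit (Functor.empty.{0} C) F] (X : C) :
    P (F.map (terminal.from X)) ↔ P (terminal.from (F.obj X)) := by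
  rw [← P.cancel_right_of_respectsIso _ (terminalComparison F),
    terminal.hom_ext (F.map (terminal.from X) ≫ terminalComparison F) (terminal.from _)]

end CategoryTheory.MorphismProperty

namespace CategoryTheory.Comonad

variable {C : Type u} [Category.{v} C] (G : Comonad C)

theorem Coalgebra.isPullback_a {A B : Coalgebra G} (m : A ⟶ B) [Mono (G.map m.f)] :
    IsPullback A.a m.f (G.map m.f) B.a := by
  have lift_f (s : PullbackCone (G.map m.f) B.a) : (s.fst ≫ G.ε.app A.A) ≫ m.f = s.snd := by
    rw [Category.assoc, ← G.counit_naturality, reassoc_of% s.condition, B.counit,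
      Category.comp_id]
  refine IsPullback.of_isLimit' ⟨m.h⟩ (PullbackCone.IsLimit.mk _
    (fun s => s.fst ≫ G.ε.app A.A) (fun s => ?_) lift_f (fun s l hl _ => ?_))
  · rw [← cancel_mono (G.map m.f), Category.assoc, m.h, ← Category.assoc, lift_f, s.condition]
  · rw [← hl, Category.assoc, A.counit, Category.comp_id]

instance : (cofree G).IsRightAdjoint :=
  (adj G).isRightAdjoint

section Transpose

variable [PreservesLimitsOfShape WalkingCospan G.toFunctor]

theorem isPullback_unit_app {A B : Coalgebra G} (m : A ⟶ B) [Mono (G.map m.f)] :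
    IsPullback ((adj G).unit.app A) m ((cofree G).map ((forget G).map m))
      ((adj G).unit.app B) := by
  rw [adj_unit]
  exact IsPullback.of_map_of_faithful (forget G) (Coalgebra.isPullback_a G m)

theorem isPullback_homEquiv {A B : Coalgebra G} (m : A ⟶ B) [Mono (G.map m.f)] {X Y : C}
    {x : (forget G).obj A ⟶ X} {t : X ⟶ Y} {χ : (forget G).obj B ⟶ Y}
    (h : IsPullback x ((forget G).map m) t χ) :
    IsPullback ((adj G).homEquiv _ _ x) m ((cofree G).map t) ((adj G).homEquiv _ _ χ) := by
  rw [Adjunction.homEquiv_unit, Adjunction.homEquiv_unit]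
  exact (isPullback_unit_app G m).paste_horiz (h.map (cofree G))

end Transpose

section Classifier

variable [HasFiniteLimits C] [PreservesFiniteLimits G.toFunctor] {Ω : C} {truth : ⊤_ C ⟶ Ω}
  (hclass : IsClassifier truth)

attribute [local instance] coalgebraHasFiniteLimits

noncomputable def truthChar : (forget G).obj ((cofree G).obj Ω) ⟶ Ω :=
  haveI := hclass.mono
  hclass.χ ((forget G).map ((cofree G).map truth))

theorem isPullback_truthChar :
    IsPullback (terminal.from _) ((forget G).map ((cofree G).map truth)) truth
      (truthChar G hclass) :=
  haveI := hclass.mono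
  hclass.isPullback_χ _

noncomputable def truthCharTranspose : (cofree G).obj Ω ⟶ (cofree G).obj Ω :=
  (adj G).homEquiv _ _ (truthChar G hclass)

noncomputable def coalgebraΩ : Coalgebra G :=
  equalizer (𝟙 _) (truthCharTranspose G hclass)

noncomputable def coalgebraΩι : coalgebraΩ G hclass ⟶ (cofree G).obj Ω :=
  equalizer.ι _ _

instance : Mono (coalgebraΩι G hclass) :=
  equalizer.ι_mono

theorem forget_map_coalgebraΩι_comp_truthChar :
    (forget G).map (coalgebraΩι G hclass) ≫ truthChar G hclass =
      ((adj G).homEquiv _ _).symm (coalgebraΩι G hclass) :=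
  ((adj G).comp_homEquiv_eq_self_iff _ _).1
    ((equalizer.condition _ _).symm.trans (Category.comp_id _))

noncomputable def coalgebraΩLift {B : Coalgebra G} (φ : B ⟶ (cofree G).obj Ω)
    (hφ : φ ≫ truthCharTranspose G hclass = φ) : B ⟶ coalgebraΩ G hclass :=
  equalizer.lift φ (by rw [Category.comp_id, hφ])

theorem coalgebraΩLift_comp_coalgebraΩι {B : Coalgebra G} (φ : B ⟶ (cofree G).obj Ω)
    (hφ : φ ≫ truthCharTranspose G hclass = φ) :
    coalgebraΩLift G hclass φ hφ ≫ coalgebraΩι G hclass = φ :=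
  equalizer.lift_ι _ _

variable (truth) in
noncomputable def truthTranspose : ⊤_ (Coalgebra G) ⟶ (cofree G).obj Ω :=
  (adj G).homEquiv _ _ (terminal.from _ ≫ truth)

noncomputable def terminalToCofreeTerminal : ⊤_ (Coalgebra G) ⟶ (cofree G).obj (⊤_ C) :=
  (adj G).homEquiv _ _ (terminal.from _)

instance : IsIso (terminalToCofreeTerminal G) :=
  isIso_of_isTerminal terminalIsTerminal
    (terminalIsTerminal.isTerminalObj (cofree G) _) _

theorem truthTranspose_eq :
    truthTranspose G truth = terminalToCofreeTerminal G ≫ (cofree G).map truth :=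
  (adj G).homEquiv_naturality_right _ _

theorem truthTranspose_comp_truthCharTranspose :
    truthTranspose G truth ≫ truthCharTranspose G hclass = truthTranspose G truth := by
  rw [truthCharTranspose, Adjunction.comp_homEquiv_eq_self_iff, truthTranspose,
    Equiv.symm_apply_apply, ← truthTranspose, truthTranspose_eq, Functor.map_comp,
    Category.assoc, ← (isPullback_truthChar G hclass).w, terminal.comp_from_assoc]

noncomputable def coalgebraTruth : ⊤_ (Coalgebra G) ⟶ coalgebraΩ G hclass :=
  coalgebraΩLift G hclass (truthTranspose G truth)
    (truthTranspose_comp_truthCharTranspose G hclass)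

theorem isPullback_coalgebraTruth :
    IsPullback (terminal.from _) ((forget G).map (coalgebraTruth G hclass)) truth
      ((forget G).map (coalgebraΩι G hclass) ≫ truthChar G hclass) := by
  have sq : IsPullback (terminalToCofreeTerminal G) (coalgebraTruth G hclass)
      ((cofree G).map truth) (coalgebraΩι G hclass) :=
    IsPullback.of_horiz_isIso_mono
      ⟨by rw [coalgebraTruth, coalgebraΩLift_comp_coalgebraΩι, truthTranspose_eq]⟩
  have pasted := (sq.map (forget G)).paste_horiz (isPullback_truthChar G hclass)
  rwa [terminal.comp_from] at pasted

theorem isPullback_coalgebraTruth_iff {A B : Coalgebra G} (m : A ⟶ B)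
    (ψ : B ⟶ coalgebraΩ G hclass) :
    IsPullback (terminal.from A) m (coalgebraTruth G hclass) ψ ↔
      IsPullback (terminal.from _) ((forget G).map m) truth
        (((adj G).homEquiv _ _).symm (ψ ≫ coalgebraΩι G hclass)) := by
  rw [Adjunction.homEquiv_naturality_left_symm, ← forget_map_coalgebraΩι_comp_truthChar]
  constructor
  · intro h
    have sq := (h.map (forget G)).paste_horiz (isPullback_coalgebraTruth G hclass)
    rwa [terminal.comp_from] at sq
  · intro h
    have sq := h.of_right' (isPullback_coalgebraTruth G hclass)
    rw [(terminalIsTerminal.isTerminalObj (forget G) _).hom_ext (IsPullback.lift _ _ _ _)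
      ((forget G).map (terminal.from A))] at sq
    exact sq.of_map_of_faithful (forget G)

theorem forget_map_homEquiv_comp_truthChar {A B : Coalgebra G} (m : A ⟶ B) [Mono m]
    {χ : (forget G).obj B ⟶ Ω}
    (hχ : IsPullback (terminal.from _) ((forget G).map m) truth χ) :
    (forget G).map ((adj G).homEquiv _ _ χ) ≫ truthChar G hclass = χ := by
  have : Mono ((forget G).map m) := (forget G).map_mono m
  have : Mono (G.map m.f) := G.map_mono ((forget G).map m)
  have sq := ((isPullback_homEquiv G m hχ).map (forget G)).paste_horiz
    (isPullback_truthChar G hclass)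
  rw [terminal.comp_from] at sq
  exact hclass.uniq sq hχ

theorem exists_homEquiv_symm_comp_coalgebraΩι_eq {A B : Coalgebra G} (m : A ⟶ B) [Mono m]
    {χ : (forget G).obj B ⟶ Ω}
    (hχ : IsPullback (terminal.from _) ((forget G).map m) truth χ) :
    ∃ ψ : B ⟶ coalgebraΩ G hclass,
      ((adj G).homEquiv _ _).symm (ψ ≫ coalgebraΩι G hclass) = χ := by
  refine ⟨coalgebraΩLift G hclass ((adj G).homEquiv _ _ χ) ?_, ?_⟩
  · rw [truthCharTranspose, Adjunction.comp_homEquiv_eq_self_iff, Equiv.symm_apply_apply,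
      forget_map_homEquiv_comp_truthChar G hclass m hχ]
  · rw [coalgebraΩLift_comp_coalgebraΩι, Equiv.symm_apply_apply]

theorem isClassifier_coalgebraTruth : IsClassifier (coalgebraTruth G hclass) where
  mono := terminalIsTerminal.mono_from _
  classifies {A B} m hm := by
    have : Mono ((forget G).map m) := (forget G).map_mono m
    obtain ⟨ψ, hψ⟩ := exists_homEquiv_symm_comp_coalgebraΩι_eq G hclass m
      (hclass.isPullback_χ ((forget G).map m))
    refine ⟨ψ, (isPullback_coalgebraTruth_iff G hclass m ψ).2 (hψ ▸ hclass.isPullback_χ _),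
      fun ψ' hψ' => (cancel_mono (coalgebraΩι G hclass)).1
        (((adj G).homEquiv _ _).symm.injective ?_)⟩
    rw [hψ]
    exact hclass.uniq ((isPullback_coalgebraTruth_iff G hclass m ψ').1 hψ')
      (hclass.isPullback_χ _)

theorem terminalFrom_coalgebraΩ_mem {P : MorphismProperty C} [P.RespectsIso]
    [P.IsStableUnderComposition] (hmono : MorphismProperty.monomorphisms C ≤ P)
    (hGΩ : P (terminal.from (G.obj Ω))) :
    P.inverseImage (forget G) (terminal.from (coalgebraΩ G hclass)) := by
  rw [MorphismProperty.inverseImage_iff, MorphismProperty.map_terminalFrom_iff P (forget G),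
    ← terminal.comp_from ((forget G).map (coalgebraΩι G hclass))]
  exact P.comp_mem _ _ (hmono _ ((forget G).map_mono _)) hGΩ

end Classifier

end CategoryTheory.Comonad

theorem display_topos_of_coalgebras_general
    {C : Type u} [Category.{v} C] [HasFiniteLimits C]
    {Ω : C} (truth : ⊤_ C ⟶ Ω) (hclass : IsClassifier truth)
    (P : MorphismProperty C) [P.IsStableUnderBaseChange] [P.RespectsIso]
    [P.IsStableUnderComposition]
    (hmono : MorphismProperty.monomorphisms C ≤ P)
    (hΩ : P (terminal.from Ω))
    (G : Comonad C) [PreservesFiniteLimits G.toFunctor]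
    (hG : ∀ ⦃X Y : C⦄ (f : X ⟶ Y), P f → P (G.toFunctor.map f)) :
    letI : HasFiniteLimits (Comonad.Coalgebra G) := coalgebraHasFiniteLimits G
    (P.inverseImage (Comonad.forget G)).IsStableUnderBaseChange ∧
    ((P.inverseImage (Comonad.forget G)).IsStableUnderComposition ∧
      (P.inverseImage (Comonad.forget G)).RespectsIso) ∧
    MorphismProperty.monomorphisms (Comonad.Coalgebra G) ≤
      P.inverseImage (Comonad.forget G) ∧
    ∃ (Ω' : Comonad.Coalgebra G) (truth' : ⊤_ (Comonad.Coalgebra G) ⟶ Ω'),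
      IsClassifier truth' ∧ P.inverseImage (Comonad.forget G) (terminal.from Ω') := by
  have hGΩ : P (terminal.from (G.obj Ω)) :=
    (MorphismProperty.map_terminalFrom_iff P G.toFunctor Ω).1 (hG _ hΩ)
  exact ⟨inferInstance, ⟨inferInstance, inferInstance⟩,
    MorphismProperty.monomorphisms_le_inverseImage (Comonad.forget G) hmono,
    Comonad.coalgebraΩ G hclass, Comonad.coalgebraTruth G hclass,
    Comonad.isClassifier_coalgebraTruth G hclass,
    Comonad.terminalFrom_coalgebraΩ_mem G hclass hmono hGΩ⟩

/-- Let `C` be a cartesian closed category with finite limits admitting a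
subobject classifier `truth : ⊤_ C ⟶ Ω`.  Let `P` be a class of morphisms of `C` stable under
base change, respecting isomorphisms, stable under composition, containing all monomorphisms
and the unique morphism `Ω ⟶ ⊤_ C`.  Let `G` be a comonad on `C` whose underlying endofunctor
preserves finite limits and maps `P` to `P`, and let `Q` be the class of morphisms of
`G`-coalgebras whose underlying morphism lies in `P`.  Then (i) `Q` is stable under base
change; (ii) `Q` is stable under composition and respects isomorphisms; (iii) `Q` contains all
monomorphisms of the category of `G`-coalgebras; (iv) the category of `G`-coalgebras admits a
subobject classifier `truth' : ⊤ ⟶ Ω'` whose `Ω' ⟶ ⊤` lies in `Q`.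
(Theorem 5.1.3(3)–(4)/Corollary 5.2.1(3): the display topos of coalgebras.) -/
theorem display_topos_of_coalgebras
    {C : Type u} [Category.{v} C] [HasFiniteLimits C]
    [CartesianMonoidalCategory C] [MonoidalClosed C]
    {Ω : C} (truth : ⊤_ C ⟶ Ω) (hclass : IsClassifier truth)
    (P : MorphismProperty C) [P.IsStableUnderBaseChange] [P.RespectsIso]
    [P.IsStableUnderComposition]
    (hmono : MorphismProperty.monomorphisms C ≤ P)
    (hΩ : P (terminal.from Ω))
    (G : Comonad C) [PreservesFiniteLimits G.toFunctor]
    (hG : ∀ ⦃X Y : C⦄ (f : X ⟶ Y), P f → P (G.toFunctor.map f)) :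
    letI : HasFiniteLimits (Comonad.Coalgebra G) := coalgebraHasFiniteLimits G
    (P.inverseImage (Comonad.forget G)).IsStableUnderBaseChange ∧
    ((P.inverseImage (Comonad.forget G)).IsStableUnderComposition ∧
      (P.inverseImage (Comonad.forget G)).RespectsIso) ∧
    MorphismProperty.monomorphisms (Comonad.Coalgebra G) ≤
      P.inverseImage (Comonad.forget G) ∧
    ∃ (Ω' : Comonad.Coalgebra G) (truth' : ⊤_ (Comonad.Coalgebra G) ⟶ Ω'),
      IsClassifier truth' ∧ P.inverseImage (Comonad.forget G) (terminal.from Ω') :=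
  display_topos_of_coalgebras_general truth hclass P hmono hΩ G hG
end
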